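/- arXiv:2301.10115 — 4 statements merged into one kernel-verified Lean document; each statement's English description precedes it below -/
import Mathlib

section
/- Let G_L, G_R be real numbers and H_L, H_R be strictly positive real numbers. Then the unregularized gain G_L^2/H_L + G_R^2/H_R - (G_L+G_R)^2/(H_L+H_R) equals zero if and only if G_L * H_R = G_R * H_L (equivalently, G_L/H_L = G_R/H_R); in particular, whenever G_L/H_L ≠ G_R/H_R the gain is strictly positive. -/
/-!
Over the common denominator the gain is a perfect square,
`G_L²/H_L + G_R²/H_R - (G_L + G_R)²/(H_L + H_R) = (G_L H_R - G_R H_L)² / (H_L H_R (H_L + H_R))`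
(Lagrange's identity behind Sedrakyan's form of Cauchy–Schwarz), and the denominator is positive.
-/

section

variable {K : Type*} [Field K]

theorem sq_div_add_sq_div_sub_sq_div_add_eq {a b x y : K} (hx : x ≠ 0) (hy : y ≠ 0)
    (hxy : x + y ≠ 0) :
    a ^ 2 / x + b ^ 2 / y - (a + b) ^ 2 / (x + y) = (a * y - b * x) ^ 2 / (x * y * (x + y)) := by
  field_simp
  ring

variable [LinearOrder K] [IsStrictOrderedRing K] {a b x y : K}

theorem sq_div_add_sq_div_sub_sq_div_add_eq_zero_iff (hx : 0 < x) (hy : 0 < y) :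
    a ^ 2 / x + b ^ 2 / y - (a + b) ^ 2 / (x + y) = 0 ↔ a * y = b * x := by
  have hden : 0 < x * y * (x + y) := by positivity
  rw [sq_div_add_sq_div_sub_sq_div_add_eq hx.ne' hy.ne' (add_pos hx hy).ne',
    div_eq_zero_iff, or_iff_left hden.ne', sq_eq_zero_iff, sub_eq_zero]

theorem sq_div_add_sq_div_sub_sq_div_add_pos_iff (hx : 0 < x) (hy : 0 < y) :
    0 < a ^ 2 / x + b ^ 2 / y - (a + b) ^ 2 / (x + y) ↔ a * y ≠ b * x := by
  have hden : 0 < x * y * (x + y) := by positivity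
  rw [sq_div_add_sq_div_sub_sq_div_add_eq hx.ne' hy.ne' (add_pos hx hy).ne',
    div_pos_iff_of_pos_right hden, sq_pos_iff, sub_ne_zero]

end

/-- The unregularized gain `G_L^2/H_L + G_R^2/H_R - (G_L+G_R)^2/(H_L+H_R)` is zero iff
`G_L * H_R = G_R * H_L` (equivalently `G_L/H_L = G_R/H_R`); in particular, whenever
`G_L/H_L ≠ G_R/H_R` the gain is strictly positive. -/
theorem gain_eq_zero_iff_and_pos_of_ne (G_L G_R H_L H_R : ℝ) (hHL : 0 < H_L) (hHR : 0 < H_R) :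
    (G_L ^ 2 / H_L + G_R ^ 2 / H_R - (G_L + G_R) ^ 2 / (H_L + H_R) = 0 ↔ G_L * H_R = G_R * H_L)
      ∧ (G_L / H_L ≠ G_R / H_R →
          0 < G_L ^ 2 / H_L + G_R ^ 2 / H_R - (G_L + G_R) ^ 2 / (H_L + H_R)) := by
  refine ⟨sq_div_add_sq_div_sub_sq_div_add_eq_zero_iff hHL hHR, fun hne => ?_⟩
  rw [sq_div_add_sq_div_sub_sq_div_add_pos_iff hHL hHR]
  rwa [Ne, ← div_eq_div_iff hHL.ne' hHR.ne']
end

section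
/- Let (Ω, m₀, ℙ) be a probability space, let X : Ω → β and V : Ω → α be measurable maps into measurable spaces, and let Y : Ω → ℝ be integrable. Suppose V is independent of the pair (X, Y), i.e. the σ-algebra generated by V is independent of the σ-algebra generated by the map ω ↦ (X ω, Y ω). Then E[Y | σ(X) ⊔ σ(V)] = E[Y | σ(X)] almost everywhere. -/
set_option maxHeartbeats 1000000

open MeasureTheory ProbabilityTheory

/-- If `f` is `m₁`-measurable and `m₁` is independent of `m₂`, then the integral of `f`
over a `m₂`-measurable set `T` factorizes. -/
lemma setIntegral_eq_mul_of_indep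
    {Ω : Type*} {m₁ m₂ m₀ : MeasurableSpace Ω} {μ : Measure Ω} [IsProbabilityMeasure μ]
    (hle₁ : m₁ ≤ m₀) (hle₂ : m₂ ≤ m₀) (hindp : Indep m₁ m₂ μ)
    {f : Ω → ℝ} (hf : StronglyMeasurable[m₁] f) (hfint : Integrable f μ)
    {T : Set Ω} (hT : MeasurableSet[m₂] T) :
    ∫ x in T, f x ∂μ = (μ T).toReal * ∫ x, f x ∂μ := by
  have h := condExp_indep_eq hle₁ hle₂ hf hindp
  calc ∫ x in T, f x ∂μ = ∫ x in T, (μ[f|m₂]) x ∂μ :=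
        (setIntegral_condExp hle₂ hfint hT).symm
    _ = ∫ _x in T, (∫ x, f x ∂μ) ∂μ :=
        setIntegral_congr_ae (hle₂ _ hT) (h.mono fun x hx _ => hx)
    _ = (μ T).toReal * ∫ x, f x ∂μ := by rw [setIntegral_const, smul_eq_mul, measureReal_def]

/-- Abstract form: if `m₂` is independent of `m₃`, `m₁ ≤ m₃`, and `Y` is `m₃`-measurable
and integrable, then `μ[Y | m₁ ⊔ m₂] = μ[Y | m₁]` a.e. -/
lemma condexp_sup_of_indep_aux
    {Ω : Type*} {m₁ m₂ m₃ m₀ : MeasurableSpace Ω} {μ : Measure Ω} [IsProbabilityMeasure μ]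
    (hle₁ : m₁ ≤ m₀) (hle₂ : m₂ ≤ m₀) (hle₃ : m₃ ≤ m₀) (h13 : m₁ ≤ m₃)
    {Y : Ω → ℝ} (hY : Integrable Y μ) (hYsm : StronglyMeasurable[m₃] Y)
    (hindep : Indep m₂ m₃ μ) :
    μ[Y | m₁ ⊔ m₂] =ᵐ[μ] μ[Y | m₁] := by
  have hleJ : m₁ ⊔ m₂ ≤ m₀ := sup_le hle₁ hle₂
  have hindep3 : Indep m₃ m₂ μ := hindep.symm
  have hindep1 : Indep m₁ m₂ μ := indep_of_indep_of_le_left hindep3 h13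
  set g := μ[Y | m₁] with hg
  have hg_sm : StronglyMeasurable[m₁] g := stronglyMeasurable_condExp
  have hg_int : Integrable g μ := integrable_condExp
  -- the π-system generating the join
  set C : Set (Set Ω) :=
    {s | ∃ S T, MeasurableSet[m₁] S ∧ MeasurableSet[m₂] T ∧ s = S ∩ T} with hC
  have hC_pi : IsPiSystem C := by
    rintro _ ⟨S₁, T₁, hS₁, hT₁, rfl⟩ _ ⟨S₂, T₂, hS₂, hT₂, rfl⟩ -
    exact ⟨S₁ ∩ S₂, T₁ ∩ T₂, hS₁.inter hS₂, hT₁.inter hT₂, by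
      ext x; simp only [Set.mem_inter_iff]; tauto⟩
  have hC_gen : m₁ ⊔ m₂ = MeasurableSpace.generateFrom C := by
    refine le_antisymm (sup_le ?_ ?_) (MeasurableSpace.generateFrom_le ?_)
    · intro s hs
      exact MeasurableSpace.measurableSet_generateFrom
        ⟨s, Set.univ, hs, MeasurableSet.univ, (Set.inter_univ s).symm⟩
    · intro s hs
      exact MeasurableSpace.measurableSet_generateFrom
        ⟨Set.univ, s, MeasurableSet.univ, hs, (Set.univ_inter s).symm⟩
    · rintro _ ⟨S, T, hS, hT, rfl⟩
      exact MeasurableSet.inter ((le_sup_left : m₁ ≤ m₁ ⊔ m₂) _ hS)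
        ((le_sup_right : m₂ ≤ m₁ ⊔ m₂) _ hT)
  -- key property
  have key : ∀ t, MeasurableSet[m₁ ⊔ m₂] t → ∫ x in t, g x ∂μ = ∫ x in t, Y x ∂μ := by
    refine @MeasurableSpace.induction_on_inter Ω (m₁ ⊔ m₂)
      (fun t _ => ∫ x in t, g x ∂μ = ∫ x in t, Y x ∂μ) C hC_gen hC_pi (by simp) ?_ ?_ ?_
    · rintro _ ⟨S, T, hS, hT, rfl⟩
      have hS0 : MeasurableSet[m₀] S := hle₁ _ hS
      have hT0 : MeasurableSet[m₀] T := hle₂ _ hT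
      have h1 : ∫ x in S ∩ T, Y x ∂μ = (μ T).toReal * ∫ x in S, Y x ∂μ := by
        have hind : Integrable (S.indicator Y) μ := hY.indicator hS0
        have hsm : StronglyMeasurable[m₃] (S.indicator Y) := hYsm.indicator (h13 _ hS)
        have h := setIntegral_eq_mul_of_indep hle₃ hle₂ hindep3 hsm hind hT
        rwa [setIntegral_indicator hS0, integral_indicator hS0, Set.inter_comm T S] at h
      have h2 : ∫ x in S ∩ T, g x ∂μ = (μ T).toReal * ∫ x in S, g x ∂μ := by
        have hind : Integrable (S.indicator g) μ := hg_int.indicator hS0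
        have hsm : StronglyMeasurable[m₁] (S.indicator g) := hg_sm.indicator hS
        have h := setIntegral_eq_mul_of_indep hle₁ hle₂ hindep1 hsm hind hT
        rwa [setIntegral_indicator hS0, integral_indicator hS0, Set.inter_comm T S] at h
      rw [h1, h2, setIntegral_condExp hle₁ hY hS]
    · intro t htm ht
      have ht0 : MeasurableSet[m₀] t := hleJ _ htm
      rw [setIntegral_compl ht0 hg_int, setIntegral_compl ht0 hY, ht,
        integral_condExp hle₁]
    · intro f hdisj hfm hf
      have hfm0 : ∀ i, MeasurableSet[m₀] (f i) := fun i => hleJ _ (hfm i)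
      rw [integral_iUnion hfm0 hdisj hg_int.integrableOn,
        integral_iUnion hfm0 hdisj hY.integrableOn]
      exact tsum_congr hf
  exact (ae_eq_condExp_of_forall_setIntegral_eq hleJ hY
    (fun s _ _ => hg_int.integrableOn)
    (fun s hs _ => key s hs)
    ((stronglyMeasurable_condExp (m := m₁) (μ := μ) (f := Y)).mono (le_sup_left : m₁ ≤ m₁ ⊔ m₂)).aestronglyMeasurable).symm

/-- If `V` is independent of the pair `(X, Y)` (i.e. the σ-algebra generated by `V` is
independent of the σ-algebra generated by `ω ↦ (X ω, Y ω)`), then conditioning on both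
`X` and `V` gives the same conditional expectation of the integrable variable `Y` as
conditioning on `X` alone. -/
theorem condexp_join_of_indep_pair
    {Ω β α : Type*} {m₀ : MeasurableSpace Ω} {mβ : MeasurableSpace β}
    {mα : MeasurableSpace α} {μ : Measure Ω} [IsProbabilityMeasure μ]
    {X : Ω → β} {V : Ω → α} {Y : Ω → ℝ}
    (hX : Measurable X) (hV : Measurable V) (hY : Integrable Y μ)
    (hYmeas : Measurable Y)
    (hindep : Indep (MeasurableSpace.comap V mα)
      (MeasurableSpace.comap (fun ω => (X ω, Y ω)) inferInstance) μ) :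
    μ[Y | MeasurableSpace.comap X mβ ⊔ MeasurableSpace.comap V mα]
      =ᵐ[μ] μ[Y | MeasurableSpace.comap X mβ] := by
  have hpair : Measurable[MeasurableSpace.comap (fun ω => (X ω, Y ω)) inferInstance]
      (fun ω => (X ω, Y ω)) := MeasurableSpace.comap_le_iff_le_map.mp le_rfl
  refine condexp_sup_of_indep_aux hX.comap_le hV.comap_le (hX.prodMk hYmeas).comap_le
    ?_ hY ?_ hindep
  · exact MeasurableSpace.comap_le_iff_le_map.mpr (Measurable.le_map (measurable_fst.comp hpair))
  · exact (measurable_snd.comp hpair).stronglyMeasurable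
end

section
/- Let (Ω, m₀, ℙ) be a probability space, let Y and Y' be real-valued square-integrable random variables that are identically distributed, let p ∈ [0,1], and let B be a Bernoulli random variable with ℙ(B = 1) = p and ℙ(B = 0) = 1 − p, such that B, Y, Y' are mutually independent. Define V = B·Y + (1 − B)·Y'. Then the covariance satisfies Cov(V, Y) = p · Var(Y). -/
open MeasureTheory ProbabilityTheory

/-- The covariance of two real-valued random variables. -/
noncomputable def cov {Ω : Type*} [MeasurableSpace Ω] (X Y : Ω → ℝ) (μ : Measure Ω) : ℝ :=
  ∫ ω, (X ω - ∫ x, X x ∂μ) * (Y ω - ∫ x, Y x ∂μ) ∂μ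

lemma cov_eq_integral_mul_sub {Ω : Type*} [MeasurableSpace Ω] {μ : Measure Ω}
    [IsProbabilityMeasure μ] {X Y : Ω → ℝ} (hX : Integrable X μ) (hY : Integrable Y μ)
    (hXY : Integrable (fun ω => X ω * Y ω) μ) :
    cov X Y μ = (∫ ω, X ω * Y ω ∂μ) - (∫ ω, X ω ∂μ) * (∫ ω, Y ω ∂μ) := by
  set a := ∫ ω, X ω ∂μ
  set b := ∫ ω, Y ω ∂μ
  have h1 : Integrable (fun ω => a * Y ω) μ := hY.const_mul a
  have h2 : Integrable (fun ω => X ω * b) μ := hX.mul_const b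
  have h3 : Integrable (fun ω => X ω * Y ω - a * Y ω) μ := hXY.sub h1
  have h4 : Integrable (fun ω => X ω * b - a * b) μ := h2.sub (integrable_const _)
  have hrw : (fun ω => (X ω - a) * (Y ω - b)) =
      fun ω => (X ω * Y ω - a * Y ω) - (X ω * b - a * b) := by
    funext ω; ring
  rw [cov, hrw, integral_sub h3 h4, integral_sub hXY h1, integral_sub h2 (integrable_const _),
    integral_const_mul (μ := μ) a Y, integral_mul_const b X, integral_const]
  simp [a, b]

/-- If `Y, Y'` are identically distributed square-integrable random variables, `B` is a
Bernoulli(`p`) random variable, `B, Y, Y'` are mutually independent, and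
`V = B⬝Y + (1-B)⬝Y'`, then `Cov(V, Y) = p ⬝ Var(Y)`. -/
theorem cov_mix_eq_p_mul_variance
    {Ω : Type*} {m₀ : MeasurableSpace Ω} {μ : Measure Ω} [IsProbabilityMeasure μ]
    {Y Y' B : Ω → ℝ} (hY : MemLp Y 2 μ) (hY' : MemLp Y' 2 μ) (hB : Measurable B)
    (hYm : Measurable Y) (hY'm : Measurable Y')
    (hid : μ.map Y = μ.map Y')
    (p : ℝ) (hp0 : 0 ≤ p) (hp1 : p ≤ 1)
    (hB1 : μ {ω | B ω = 1} = ENNReal.ofReal p)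
    (hB0 : μ {ω | B ω = 0} = ENNReal.ofReal (1 - p))
    (hindep : iIndepFun ![B, Y, Y'] μ) :
    cov (fun ω => B ω * Y ω + (1 - B ω) * Y' ω) Y μ = p * variance Y μ := by
  have hmeas : ∀ i, Measurable (![B, Y, Y'] i) := by
    intro i; fin_cases i <;> simp [hB, hYm, hY'm]
  -- B is a.e. {0,1}
  have hA1 : MeasurableSet {ω | B ω = 1} := hB (measurableSet_singleton 1)
  have hA0 : MeasurableSet {ω | B ω = 0} := hB (measurableSet_singleton 0)
  have hunion : μ ({ω | B ω = 1} ∪ {ω | B ω = 0}) = 1 := by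
    rw [measure_union _ hA0, hB1, hB0, ← ENNReal.ofReal_add hp0 (by linarith)]
    · norm_num
    · intro s hs1 hs0 ω hω
      have h1 := hs1 hω; have h0 := hs0 hω
      simp only [Set.mem_setOf_eq] at h1 h0
      norm_num [h1] at h0
  have hBae : ∀ᵐ ω ∂μ, B ω = 1 ∨ B ω = 0 := by
    have : μ ({ω | B ω = 1} ∪ {ω | B ω = 0})ᶜ = 0 := by
      rw [measure_compl (hA1.union hA0) (measure_ne_top _ _), hunion]
      simp
    filter_upwards [measure_eq_zero_iff_ae_notMem.mp this] with ω hω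
    by_contra hcon
    push_neg at hcon
    exact hω (by simp [Set.mem_union, Set.mem_setOf_eq, hcon] at * )
  -- expectations of B
  have hBbd : ∀ᵐ ω ∂μ, ‖B ω‖ ≤ 1 := by
    filter_upwards [hBae] with ω h
    rcases h with h | h <;> simp [h]
  have hBint : Integrable B μ :=
    Integrable.mono' (integrable_const 1) hB.aestronglyMeasurable hBbd
  have hEB : ∫ ω, B ω ∂μ = p := by
    have hcg : B =ᵐ[μ] Set.indicator {ω | B ω = 1} 1 := by
      filter_upwards [hBae] with ω h
      rcases h with h | h
      · simp [Set.indicator_apply, Set.mem_setOf_eq, h]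
      · simp [Set.indicator_apply, Set.mem_setOf_eq, h]
    rw [integral_congr_ae hcg, integral_indicator_one hA1, measureReal_def, hB1, ENNReal.toReal_ofReal hp0]
  have hE1B : ∫ ω, (1 - B ω) ∂μ = 1 - p := by
    rw [integral_sub (integrable_const 1) hBint, hEB]
    simp
  -- basic integrabilities
  have hYint : Integrable Y μ := hY.integrable one_le_two
  have hY'int : Integrable Y' μ := hY'.integrable one_le_two
  have hY2int : Integrable (fun ω => Y ω * Y ω) μ := by
    have := hY.integrable_sq
    simpa [pow_two] using this
  -- independence facts
  have hIBY : IndepFun B Y μ := by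
    simpa using hindep.indepFun (show (0 : Fin 3) ≠ 1 by decide)
  have hIBY' : IndepFun B Y' μ := by
    simpa using hindep.indepFun (show (0 : Fin 3) ≠ 2 by decide)
  have hIY'Y : IndepFun Y' Y μ := by
    simpa using hindep.indepFun (show (2 : Fin 3) ≠ 1 by decide)
  have hYY'int : Integrable (fun ω => Y' ω * Y ω) μ := by
    have := hIY'Y.integrable_mul hY'int hYint
    exact this
  -- mixed integrabilities
  have hBY2int : Integrable (fun ω => B ω * (Y ω * Y ω)) μ := by
    refine Integrable.mono' hY2int.abs
      (hB.mul (hYm.mul hYm)).aestronglyMeasurable ?_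
    filter_upwards [hBbd] with ω h
    rw [Real.norm_eq_abs, abs_mul]
    exact mul_le_of_le_one_left (abs_nonneg _) (by simpa using h)
  have h1BY'Yint : Integrable (fun ω => (1 - B ω) * (Y' ω * Y ω)) μ := by
    refine Integrable.mono' hYY'int.abs
      ((measurable_const.sub hB).mul (hY'm.mul hYm)).aestronglyMeasurable ?_
    filter_upwards [hBae] with ω h
    rw [Real.norm_eq_abs, abs_mul]
    refine mul_le_of_le_one_left (abs_nonneg _) ?_
    rcases h with h | h <;> simp [h]
  have hBYint : Integrable (fun ω => B ω * Y ω) μ := by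
    refine Integrable.mono' hYint.abs (hB.mul hYm).aestronglyMeasurable ?_
    filter_upwards [hBbd] with ω h
    rw [Real.norm_eq_abs, abs_mul]
    exact mul_le_of_le_one_left (abs_nonneg _) (by simpa using h)
  have h1BY'int : Integrable (fun ω => (1 - B ω) * Y' ω) μ := by
    refine Integrable.mono' hY'int.abs
      ((measurable_const.sub hB).mul hY'm).aestronglyMeasurable ?_
    filter_upwards [hBae] with ω h
    rw [Real.norm_eq_abs, abs_mul]
    refine mul_le_of_le_one_left (abs_nonneg _) ?_
    rcases h with h | h <;> simp [h]
  have hVint : Integrable (fun ω => B ω * Y ω + (1 - B ω) * Y' ω) μ := hBYint.add h1BY'int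
  have hVYint : Integrable (fun ω => (B ω * Y ω + (1 - B ω) * Y' ω) * Y ω) μ := by
    have := hBY2int.add h1BY'Yint
    refine this.congr (Filter.Eventually.of_forall fun ω => ?_)
    simp only [Pi.add_apply]; ring
  -- equal means
  have hEY' : ∫ ω, Y' ω ∂μ = ∫ ω, Y ω ∂μ := by
    calc ∫ ω, Y' ω ∂μ = ∫ x, x ∂(μ.map Y') :=
          (integral_map hY'm.aemeasurable aestronglyMeasurable_id).symm
      _ = ∫ x, x ∂(μ.map Y) := by rw [hid]
      _ = ∫ ω, Y ω ∂μ := integral_map hYm.aemeasurable aestronglyMeasurable_id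
  -- product expectations
  have hEBY : ∫ ω, B ω * Y ω ∂μ = p * ∫ ω, Y ω ∂μ := by
    have := hIBY.integral_mul_eq_mul_integral hBint.aestronglyMeasurable hYint.aestronglyMeasurable
    simpa [Pi.mul_apply, hEB] using this
  have hEBY2 : ∫ ω, B ω * (Y ω * Y ω) ∂μ = p * ∫ ω, Y ω * Y ω ∂μ := by
    have hind : IndepFun B (fun ω => Y ω * Y ω) μ :=
      hIBY.comp measurable_id (measurable_id.mul measurable_id)
    have := hind.integral_mul_eq_mul_integral hBint.aestronglyMeasurable hY2int.aestronglyMeasurable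
    simpa [Pi.mul_apply, hEB] using this
  have hE1BY' : ∫ ω, (1 - B ω) * Y' ω ∂μ = (1 - p) * ∫ ω, Y ω ∂μ := by
    have hind : IndepFun (fun ω => 1 - B ω) Y' μ :=
      hIBY'.comp (measurable_const.sub measurable_id) measurable_id
    have := hind.integral_mul_eq_mul_integral ((integrable_const 1).sub hBint).aestronglyMeasurable hY'int.aestronglyMeasurable
    simpa [Pi.mul_apply, hE1B, hEY'] using this
  have hE1BY'Y : ∫ ω, (1 - B ω) * Y' ω * Y ω ∂μ =
      ((1 - p) * ∫ ω, Y ω ∂μ) * ∫ ω, Y ω ∂μ := by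
    have hpair : IndepFun (fun a => (B a, Y' a)) Y μ := by
      have := hindep.indepFun_prodMk hmeas 0 2 1 (by decide) (by decide)
      simpa using this
    have hind : IndepFun (fun ω => (1 - B ω) * Y' ω) Y μ :=
      hpair.comp ((measurable_const.sub measurable_fst).mul measurable_snd) measurable_id
    have := hind.integral_mul_eq_mul_integral h1BY'int.aestronglyMeasurable hYint.aestronglyMeasurable
    simpa [Pi.mul_apply, hE1BY'] using this
  -- put everything together
  rw [cov_eq_integral_mul_sub hVint hYint hVYint]
  have hEV : ∫ ω, (B ω * Y ω + (1 - B ω) * Y' ω) ∂μ = ∫ ω, Y ω ∂μ := by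
    rw [integral_add hBYint h1BY'int, hEBY, hE1BY']
    ring
  have hEVY : ∫ ω, (B ω * Y ω + (1 - B ω) * Y' ω) * Y ω ∂μ =
      p * ∫ ω, Y ω * Y ω ∂μ + ((1 - p) * ∫ ω, Y ω ∂μ) * ∫ ω, Y ω ∂μ := by
    have hsplit : ∫ ω, (B ω * Y ω + (1 - B ω) * Y' ω) * Y ω ∂μ =
        ∫ ω, (B ω * (Y ω * Y ω) + (1 - B ω) * Y' ω * Y ω) ∂μ := by
      congr 1; funext ω; ring
    rw [hsplit, integral_add hBY2int (h1BY'Yint.congr (Filter.Eventually.of_forall fun ω => by ring)),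
      hEBY2, hE1BY'Y]
  rw [hEVY, hEV, variance_eq_sub hY]
  have hpow : (∫ ω, Y ω ^ 2 ∂μ) = ∫ ω, Y ω * Y ω ∂μ := by
    congr 1; funext ω; ring
  simp only [Pi.pow_apply] at *
  rw [hpow]
  ring
end

section
/- Let (Ω, m₀, ℙ) be a probability space, let Y and Y' be real-valued square-integrable random variables that are identically distributed with Var(Y) > 0, let p ∈ [0,1], and let B be a Bernoulli random variable with ℙ(B = 1) = p and ℙ(B = 0) = 1 − p, such that B, Y, Y' are mutually independent. Define V = B·Y + (1 − B)·Y'. Then the correlation Corr(V, Y) = Cov(V, Y) / (√Var(V) · √Var(Y)) equals p. -/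
open MeasureTheory ProbabilityTheory

lemma integrable_mul_of_memLp_two {Ω : Type*} [MeasurableSpace Ω] {μ : Measure Ω}
    {f g : Ω → ℝ} (hf : MemLp f 2 μ) (hg : MemLp g 2 μ) :
    Integrable (fun ω => f ω * g ω) μ := by
  refine (hf.integrable_sq.add hg.integrable_sq).mono
    (hf.aestronglyMeasurable.mul hg.aestronglyMeasurable) (Filter.Eventually.of_forall fun ω => ?_)
  simp only [Real.norm_eq_abs, abs_mul]
  have h1 : |f ω * g ω| ≤ f ω ^ 2 + g ω ^ 2 := by
    rw [abs_mul]
    nlinarith [sq_nonneg (|f ω| - |g ω|), abs_nonneg (f ω), abs_nonneg (g ω),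
      sq_abs (f ω), sq_abs (g ω)]
  calc |f ω| * |g ω| = |f ω * g ω| := (abs_mul _ _).symm
    _ ≤ f ω ^ 2 + g ω ^ 2 := h1
    _ ≤ |f ω ^ 2 + g ω ^ 2| := le_abs_self _

lemma cov_eq_sub {Ω : Type*} [MeasurableSpace Ω] {μ : Measure Ω} [IsProbabilityMeasure μ]
    {X Y : Ω → ℝ} (hX : Integrable X μ) (hY : Integrable Y μ)
    (hXY : Integrable (fun ω => X ω * Y ω) μ) :
    cov X Y μ = (∫ ω, X ω * Y ω ∂μ) - (∫ ω, X ω ∂μ) * ∫ ω, Y ω ∂μ := by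
  unfold cov
  have hpt : ∀ ω, (X ω - ∫ x, X x ∂μ) * (Y ω - ∫ x, Y x ∂μ)
      = X ω * Y ω - ((∫ x, X x ∂μ) * Y ω + (∫ x, Y x ∂μ) * X ω
          - (∫ x, X x ∂μ) * (∫ x, Y x ∂μ)) := by
    intro ω; ring
  simp_rw [hpt]
  have h1 : Integrable (fun ω => (∫ x, X x ∂μ) * Y ω + (∫ x, Y x ∂μ) * X ω) μ :=
    (hY.const_mul _).add (hX.const_mul _)
  have h2 : Integrable (fun ω => (∫ x, X x ∂μ) * Y ω + (∫ x, Y x ∂μ) * X ω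
      - (∫ x, X x ∂μ) * ∫ x, Y x ∂μ) μ := h1.sub (integrable_const _)
  rw [integral_sub hXY h2, integral_sub h1 (integrable_const _),
    integral_add (hY.const_mul _) (hX.const_mul _), integral_const_mul, integral_const_mul,
    integral_const]
  simp only [measure_univ, ENNReal.toReal_one, probReal_univ, smul_eq_mul, one_mul]
  ring

/-- If `Y, Y'` are identically distributed square-integrable random variables with
`Var(Y) > 0`, `B` is a Bernoulli(`p`) random variable, `B, Y, Y'` are mutually
independent, and `V = B⬝Y + (1-B)⬝Y'`, then the correlation
`Corr(V, Y) = Cov(V, Y) / (√Var(V) ⬝ √Var(Y))` equals `p`. -/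
theorem corr_mix_eq_p
    {Ω : Type*} {m₀ : MeasurableSpace Ω} {μ : Measure Ω} [IsProbabilityMeasure μ]
    {Y Y' B : Ω → ℝ} (hY : MemLp Y 2 μ) (hY' : MemLp Y' 2 μ) (hB : Measurable B)
    (hYm : Measurable Y) (hY'm : Measurable Y')
    (hid : μ.map Y = μ.map Y') (hvar : 0 < variance Y μ)
    (p : ℝ) (hp0 : 0 ≤ p) (hp1 : p ≤ 1)
    (hB1 : μ {ω | B ω = 1} = ENNReal.ofReal p)
    (hB0 : μ {ω | B ω = 0} = ENNReal.ofReal (1 - p))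
    (hindep : iIndepFun (β := fun _ : Fin 3 => ℝ) ![B, Y, Y'] μ) :
    cov (fun ω => B ω * Y ω + (1 - B ω) * Y' ω) Y μ
        / (Real.sqrt (variance (fun ω => B ω * Y ω + (1 - B ω) * Y' ω) μ)
            * Real.sqrt (variance Y μ)) = p := by
  set V : Ω → ℝ := fun ω => B ω * Y ω + (1 - B ω) * Y' ω with hV
  -- measurability of components of the vector
  have hmeas : ∀ i, Measurable (![B, Y, Y'] i) := by
    intro i; fin_cases i
    · exact hB
    · exact hYm
    · exact hY'm
  -- measurable sets
  have hs1 : MeasurableSet {ω | B ω = 1} := hB (measurableSet_singleton 1)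
  have hs0 : MeasurableSet {ω | B ω = 0} := hB (measurableSet_singleton 0)
  -- B takes values in {0,1} a.e.
  have hdisj : Disjoint {ω | B ω = 0} {ω | B ω = 1} := by
    rw [Set.disjoint_left]
    intro ω h0 h1
    simp only [Set.mem_setOf_eq] at h0 h1
    rw [h0] at h1; norm_num at h1
  have hunion : μ ({ω | B ω = 0} ∪ {ω | B ω = 1}) = 1 := by
    rw [measure_union hdisj hs1, hB0, hB1, ← ENNReal.ofReal_add (by linarith) hp0]
    norm_num
  have hBae : ∀ᵐ ω ∂μ, B ω = 0 ∨ B ω = 1 := by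
    have hcompl : μ ({ω | B ω = 0} ∪ {ω | B ω = 1})ᶜ = 0 := by
      rw [measure_compl (hs0.union hs1) (measure_ne_top μ _), hunion, measure_univ, tsub_self]
    have hset : {ω | ¬(B ω = 0 ∨ B ω = 1)} = ({ω | B ω = 0} ∪ {ω | B ω = 1})ᶜ := by
      ext ω; simp [not_or]
    rw [ae_iff, hset]
    exact hcompl
  -- expectation of B
  have hEB : ∫ ω, B ω ∂μ = p := by
    have hind : B =ᵐ[μ] Set.indicator {ω | B ω = 1} 1 := by
      filter_upwards [hBae] with ω hω
      rcases hω with h | h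
      · rw [Set.indicator_of_notMem (by simp [h]), h]
      · rw [Set.indicator_of_mem (by simpa using h), h, Pi.one_apply]
    rw [integral_congr_ae hind, integral_indicator_one hs1, measureReal_def, hB1, ENNReal.toReal_ofReal hp0]
  -- integrabilities
  have hYint : Integrable Y μ := hY.integrable one_le_two
  have hY'int : Integrable Y' μ := hY'.integrable one_le_two
  have hYY : Integrable (fun ω => Y ω * Y ω) μ := integrable_mul_of_memLp_two hY hY
  have hY'Y' : Integrable (fun ω => Y' ω * Y' ω) μ := integrable_mul_of_memLp_two hY' hY'
  have hY'Y : Integrable (fun ω => Y' ω * Y ω) μ := integrable_mul_of_memLp_two hY' hY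
  have hBmul : ∀ {f : Ω → ℝ}, Measurable f → Integrable f μ →
      Integrable (fun ω => B ω * f ω) μ := by
    intro f hfm hfint
    refine hfint.mono (hB.mul hfm).aestronglyMeasurable ?_
    filter_upwards [hBae] with ω hω
    rcases hω with h | h <;> simp [h, Real.norm_eq_abs, abs_nonneg]
  have hBY : Integrable (fun ω => B ω * Y ω) μ := hBmul hYm hYint
  have hBY' : Integrable (fun ω => B ω * Y' ω) μ := hBmul hY'm hY'int
  have hBYY : Integrable (fun ω => B ω * (Y ω * Y ω)) μ := hBmul (hYm.mul hYm) hYY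
  have hBY'Y' : Integrable (fun ω => B ω * (Y' ω * Y' ω)) μ := hBmul (hY'm.mul hY'm) hY'Y'
  have hBY'Y : Integrable (fun ω => B ω * (Y' ω * Y ω)) μ := hBmul (hY'm.mul hYm) hY'Y
  -- independence consequences
  have iBY : IndepFun B Y μ := by
    simpa using hindep.indepFun (show (0 : Fin 3) ≠ 1 by decide)
  have iBY' : IndepFun B Y' μ := by
    simpa using hindep.indepFun (show (0 : Fin 3) ≠ 2 by decide)
  have iY'Y : IndepFun Y' Y μ := by
    simpa using hindep.indepFun (show (2 : Fin 3) ≠ 1 by decide)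
  have iBYY : IndepFun B (fun ω => Y ω * Y ω) μ := by
    have := iBY.comp measurable_id (measurable_id.mul measurable_id)
    simpa [Function.comp_def, Pi.mul_def] using this
  have iBY'Y' : IndepFun B (fun ω => Y' ω * Y' ω) μ := by
    have := iBY'.comp measurable_id (measurable_id.mul measurable_id)
    simpa [Function.comp_def, Pi.mul_def] using this
  have iBY'Y : IndepFun B (fun ω => Y' ω * Y ω) μ := by
    have h := hindep.indepFun_prodMk hmeas 2 1 0 (by decide) (by decide)
    have h2 := h.comp (measurable_fst.mul measurable_snd) measurable_id
    exact (by simpa [Function.comp_def, Pi.mul_def] using h2 :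
      IndepFun (fun ω => Y' ω * Y ω) B μ).symm
  -- identical distribution facts
  have hEY' : ∫ ω, Y' ω ∂μ = ∫ ω, Y ω ∂μ := by
    have h1 : ∫ y, y ∂(μ.map Y) = ∫ ω, Y ω ∂μ :=
      integral_map (f := fun y => y) hYm.aemeasurable measurable_id.aestronglyMeasurable
    have h2 : ∫ y, y ∂(μ.map Y') = ∫ ω, Y' ω ∂μ :=
      integral_map (f := fun y => y) hY'm.aemeasurable measurable_id.aestronglyMeasurable
    rw [← h2, ← hid, h1]
  have hEY'2 : ∫ ω, Y' ω * Y' ω ∂μ = ∫ ω, Y ω * Y ω ∂μ := by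
    have h1 : ∫ y, y * y ∂(μ.map Y) = ∫ ω, Y ω * Y ω ∂μ :=
      integral_map (f := fun y => y * y) hYm.aemeasurable
        (measurable_id.mul measurable_id).aestronglyMeasurable
    have h2 : ∫ y, y * y ∂(μ.map Y') = ∫ ω, Y' ω * Y' ω ∂μ :=
      integral_map (f := fun y => y * y) hY'm.aemeasurable
        (measurable_id.mul measurable_id).aestronglyMeasurable
    rw [← h2, ← hid, h1]
  set m := ∫ ω, Y ω ∂μ with hm
  set q := ∫ ω, Y ω * Y ω ∂μ with hq
  -- product expectations
  have EBY : ∫ ω, B ω * Y ω ∂μ = p * m := by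
    have h := iBY.integral_mul_eq_mul_integral hB.aestronglyMeasurable hYm.aestronglyMeasurable
    simpa [Pi.mul_def, hEB] using h
  have EBY' : ∫ ω, B ω * Y' ω ∂μ = p * m := by
    have h := iBY'.integral_mul_eq_mul_integral hB.aestronglyMeasurable hY'm.aestronglyMeasurable
    simpa [Pi.mul_def, hEB, hEY'] using h
  have EBYY : ∫ ω, B ω * (Y ω * Y ω) ∂μ = p * q := by
    have h := iBYY.integral_mul_eq_mul_integral hB.aestronglyMeasurable
      (hYm.mul hYm).aestronglyMeasurable
    simpa [Pi.mul_def, hEB] using h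
  have EY'Y : ∫ ω, Y' ω * Y ω ∂μ = m * m := by
    have h := iY'Y.integral_mul_eq_mul_integral hY'm.aestronglyMeasurable hYm.aestronglyMeasurable
    simpa [Pi.mul_def, hEY'] using h
  have EBY'Y : ∫ ω, B ω * (Y' ω * Y ω) ∂μ = p * (m * m) := by
    have h := iBY'Y.integral_mul_eq_mul_integral hB.aestronglyMeasurable
      (hY'm.mul hYm).aestronglyMeasurable
    rw [show (B * fun ω => Y' ω * Y ω) = fun ω => B ω * (Y' ω * Y ω) from rfl] at h
    rw [h, hEB, EY'Y]
  have EBY'Y' : ∫ ω, B ω * (Y' ω * Y' ω) ∂μ = p * q := by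
    have h := iBY'Y'.integral_mul_eq_mul_integral hB.aestronglyMeasurable
      (hY'm.mul hY'm).aestronglyMeasurable
    rw [show (B * fun ω => Y' ω * Y' ω) = fun ω => B ω * (Y' ω * Y' ω) from rfl] at h
    rw [h, hEB, hEY'2]
  -- expectation of V
  have hVpt : ∀ ω, V ω = B ω * Y ω + (Y' ω - B ω * Y' ω) := fun ω => by
    simp only [hV]; ring
  have hsub1 : Integrable (fun ω => Y' ω - B ω * Y' ω) μ := hY'int.sub hBY'
  have hVint : Integrable V μ :=
    (hBY.add hsub1).congr (Filter.Eventually.of_forall fun ω => (hVpt ω).symm)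
  have EV : ∫ ω, V ω ∂μ = m := by
    calc ∫ ω, V ω ∂μ = ∫ ω, (B ω * Y ω + (Y' ω - B ω * Y' ω)) ∂μ := by simp_rw [hVpt]
      _ = (∫ ω, B ω * Y ω ∂μ) + ((∫ ω, Y' ω ∂μ) - ∫ ω, B ω * Y' ω ∂μ) := by
          rw [integral_add hBY hsub1, integral_sub hY'int hBY']
      _ = p * m + (m - p * m) := by rw [EBY, EBY', hEY']
      _ = m := by ring
  -- expectation of V * Y
  have hVYpt : ∀ ω, V ω * Y ω = B ω * (Y ω * Y ω) + (Y' ω * Y ω - B ω * (Y' ω * Y ω)) :=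
    fun ω => by simp only [hV]; ring
  have hsub2 : Integrable (fun ω => Y' ω * Y ω - B ω * (Y' ω * Y ω)) μ := hY'Y.sub hBY'Y
  have hVYint : Integrable (fun ω => V ω * Y ω) μ :=
    (hBYY.add hsub2).congr (Filter.Eventually.of_forall fun ω => (hVYpt ω).symm)
  have EVY : ∫ ω, V ω * Y ω ∂μ = p * q + (m * m - p * (m * m)) := by
    calc ∫ ω, V ω * Y ω ∂μ
        = ∫ ω, (B ω * (Y ω * Y ω) + (Y' ω * Y ω - B ω * (Y' ω * Y ω))) ∂μ := by
          simp_rw [hVYpt]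
      _ = (∫ ω, B ω * (Y ω * Y ω) ∂μ)
          + ((∫ ω, Y' ω * Y ω ∂μ) - ∫ ω, B ω * (Y' ω * Y ω) ∂μ) := by
          rw [integral_add hBYY hsub2, integral_sub hY'Y hBY'Y]
      _ = p * q + (m * m - p * (m * m)) := by rw [EBYY, EY'Y, EBY'Y]
  -- variance of Y
  have hvarY : variance Y μ = q - m * m := by
    rw [variance_eq_sub hY]
    simp only [Pi.pow_apply, pow_two]
    rfl
  -- covariance
  have hcov : cov V Y μ = p * variance Y μ := by
    rw [cov_eq_sub hVint hYint hVYint, EVY, EV, hvarY]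
    ring
  -- V is in L2
  have hVL2 : MemLp V 2 μ := by
    refine MemLp.mono (hY.norm.add hY'.norm)
      ((hB.mul hYm).add ((measurable_const.sub hB).mul hY'm)).aestronglyMeasurable ?_
    filter_upwards [hBae] with ω hω
    have hnn : (0:ℝ) ≤ ‖Y ω‖ + ‖Y' ω‖ := by positivity
    rcases hω with h | h
    · simp only [hV, h, Pi.add_apply, Real.norm_eq_abs]
      rw [abs_of_nonneg (by positivity : (0:ℝ) ≤ |Y ω| + |Y' ω|)]
      have heq : |0 * Y ω + (1 - 0) * Y' ω| = |Y' ω| := by norm_num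
      rw [heq]
      linarith [abs_nonneg (Y ω)]
    · simp only [hV, h, Pi.add_apply, Real.norm_eq_abs]
      rw [abs_of_nonneg (by positivity : (0:ℝ) ≤ |Y ω| + |Y' ω|)]
      have heq : |1 * Y ω + (1 - 1) * Y' ω| = |Y ω| := by norm_num
      rw [heq]
      linarith [abs_nonneg (Y' ω)]
  -- second moment of V
  have EV2 : ∫ ω, V ω * V ω ∂μ = q := by
    have hV2ae : (fun ω => V ω * V ω)
        =ᵐ[μ] fun ω => B ω * (Y ω * Y ω) + (Y' ω * Y' ω - B ω * (Y' ω * Y' ω)) := by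
      filter_upwards [hBae] with ω hω
      rcases hω with h | h <;> simp only [hV, h] <;> ring
    have hsub3 : Integrable (fun ω => Y' ω * Y' ω - B ω * (Y' ω * Y' ω)) μ :=
      hY'Y'.sub hBY'Y'
    rw [integral_congr_ae hV2ae, integral_add hBYY hsub3,
      integral_sub hY'Y' hBY'Y', EBYY, EBY'Y', hEY'2]
    ring
  -- variance of V
  have hvarV : variance V μ = variance Y μ := by
    rw [variance_eq_sub hVL2, hvarY, EV]
    have : ∫ x, (V ^ 2) x ∂μ = q := by
      simpa only [Pi.pow_apply, pow_two] using EV2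
    rw [this]
    ring
  -- conclusion
  rw [hcov, hvarV, Real.mul_self_sqrt hvar.le, mul_div_assoc,
    div_self (ne_of_gt hvar), mul_one]
end
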